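/- Let a, b, c, d form a 2×2 quantum matrix in an associative unital ℚ(q)-algebra, write 𝐱^{(m)} := ((q − q^{−1})^{−1} x)^m / [m]_q! for x ∈ {a, b, d}, and set A(h,f,r,s) := binom(r+1,2) + binom(s,2) − r(h+f−r). Then for all h, f ∈ ℕ: 𝐝^{(f)} 𝐚^{(h)} = Σ_{r=0}^{min(h,f)} Σ_{s=0}^{r} (−1)^r q^{A(h,f,r,s)} (q−1)^s (s)_q! (r choose s)_q · 𝐚^{(h−r)} 𝐛^{(r)} 𝐝^{(f−r)} (c; f − r choose s), and also 𝐝^{(f)} 𝐚^{(h)} = Σ_{r=0}^{min(h,f)} Σ_{s=0}^{r} (−1)^r q^{A(h,f,r,s)} (q−1)^s (s)_q! (r choose s)_q · 𝐚^{(h−r)} 𝐛^{(r)} (c; 0 choose s) 𝐝^{(f−r)}. (Relation [D.3+] of Theorem 4.6: the case where the bottom-left corner c of the rectangle of generators lies on the main diagonal of the q-matrix of generators of F_q[M_n].) -/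

import Mathlib

noncomputable section

open Finset

/-- The field `ℚ(q)` of rational functions over `ℚ`. -/
abbrev 𝕂 : Type := RatFunc ℚ

/-- The indeterminate `q`. -/
def q : 𝕂 := RatFunc.X

/-- `(n)_q = 1 + q + ⋯ + q^(n-1)`. -/
def qNum (n : ℕ) : 𝕂 := ∑ i ∈ range n, q ^ i

/-- `(n)_q! = ∏_{r=1}^n (r)_q`. -/
def qNumFac (n : ℕ) : 𝕂 := ∏ r ∈ range n, qNum (r + 1)

/-- `(n choose s)_q = (n)_q! / ((s)_q! (n-s)_q!)`. -/
def qNumBinom (n s : ℕ) : 𝕂 := qNumFac n / (qNumFac s * qNumFac (n - s))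

/-- `[n]_q = (q^n - q^(-n))/(q - q⁻¹)`. -/
def qInt (n : ℕ) : 𝕂 := (q ^ n - q⁻¹ ^ n) / (q - q⁻¹)

/-- `[n]_q! = ∏_{r=1}^n [r]_q`. -/
def qIntFac (n : ℕ) : 𝕂 := ∏ r ∈ range n, qInt (r + 1)

/-- `[n choose s]_q = [n]_q! / ([s]_q! [n-s]_q!)`. -/
def qIntBinom (n s : ℕ) : 𝕂 := qIntFac n / (qIntFac s * qIntFac (n - s))

variable {A : Type*} [Ring A] [Algebra 𝕂 A]

/-- The `q`-divided power `X^(n) = X^n / [n]_q!`. -/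
def qDiv (X : A) (n : ℕ) : A := (qIntFac n)⁻¹ • X ^ n

/-- The `q`-binomial coefficient `(X ; c choose n) = ∏_{s=1}^n (q^(c+1-s) X - 1)/(q^s - 1)`. -/
def qBin (X : A) (c : ℤ) (n : ℕ) : A :=
  (∏ s ∈ range n, (q ^ (s + 1) - 1))⁻¹ •
    ((List.range n).map (fun i => (q ^ (c - (i : ℤ)) : 𝕂) • X - 1)).prod

/-- `{X ; c choose n , r} = ∑_{s=0}^r q^(binom(s+1,2)) (r choose s)_q (X ; c+s choose n-r)`. -/
def qBrace (X : A) (c : ℤ) (n r : ℕ) : A :=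
  ∑ s ∈ range (r + 1),
    (q ^ ((s + 1).choose 2) * qNumBinom r s : 𝕂) • qBin X (c + s) (n - r)

/-!
Put `x = k • a`, `z = k • d`, `y = k • (b * c)` with `k = (q - q⁻¹)⁻¹`. The quantum-matrix
relations say exactly that `x z - z x = y` and that `y` `q²`-skew-commutes with `x` and `z`, so
`z^f x^h` is reordered as in a `q`-Weyl algebra: moving one `x` at a time to the left gives
`z^f x^h = ∑_r (-1)^r q^(binom(r+1,2) - r(h+f-r)) [h]⋯[h-r+1] [f]⋯[f-r+1] x^(h-r) y^(r) z^(f-r)`,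
where the recursion for the coefficients comes down to `[h+1] = q^(-(r+1)) [h-r] + q^(h-r) [r+1]`.
Since `b` and `c` commute, `y^(r) = 𝐛^(r) c^r`, and `c^r` is expanded in the basis
`(c; 0 choose s)` by the `q`-Newton formula
`X^r = ∑_s q^binom(s,2) (r choose s)_q ∏_{i<s} (q^(-i) X - 1)`.
Finally `(c; 0 choose s) 𝐝^(n) = 𝐝^(n) (c; n choose s)` because `c d = q d c`.
-/

lemma q_ne_zero : q ≠ 0 := RatFunc.X_ne_zero

lemma q_pow_sub_one_ne_zero {m : ℕ} (hm : m ≠ 0) : q ^ m - 1 ≠ 0 := by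
  have : (q ^ m - 1 : 𝕂) = algebraMap (Polynomial ℚ) 𝕂 (Polynomial.X ^ m - Polynomial.C 1) := by
    simp [q, RatFunc.algebraMap_X]
  rw [this]
  exact RatFunc.algebraMap_ne_zero (Polynomial.X_pow_sub_C_ne_zero (Nat.pos_of_ne_zero hm) 1)

lemma q_sub_one_ne_zero : q - 1 ≠ 0 := by simpa using q_pow_sub_one_ne_zero one_ne_zero

lemma q_sub_q_inv_ne_zero : q - q⁻¹ ≠ 0 := by
  have h := q_pow_sub_one_ne_zero two_ne_zero
  contrapose! h
  field_simp [q_ne_zero] at h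
  linear_combination h

lemma inv_q_pow (n : ℕ) : q⁻¹ ^ n = q ^ (-(n : ℤ)) := by
  rw [zpow_neg, zpow_natCast, inv_pow]

lemma qInt_zero : qInt 0 = 0 := by simp [qInt]

lemma qInt_one : qInt 1 = 1 := by simp [qInt, q_sub_q_inv_ne_zero]

lemma qInt_add (m n : ℕ) : qInt (m + n) = q⁻¹ ^ n * qInt m + q ^ m * qInt n := by
  simp only [qInt]; ring

lemma qInt_succ_ne_zero (n : ℕ) : qInt (n + 1) ≠ 0 := by
  have h : q ^ (2 * (n + 1)) - 1 = q ^ (n + 1) * (q ^ (n + 1) - q⁻¹ ^ (n + 1)) := by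
    rw [mul_sub, ← mul_pow q q⁻¹, mul_inv_cancel₀ q_ne_zero]; ring
  exact div_ne_zero (right_ne_zero_of_mul (h ▸ q_pow_sub_one_ne_zero (by omega)))
    q_sub_q_inv_ne_zero

lemma qIntFac_ne_zero (n : ℕ) : qIntFac n ≠ 0 :=
  prod_ne_zero_iff.mpr fun i _ => qInt_succ_ne_zero i

lemma qNum_add (m n : ℕ) : qNum (m + n) = qNum m + q ^ m * qNum n := by
  simp only [qNum, sum_range_add, mul_sum, pow_add]

lemma qNum_succ_ne_zero (n : ℕ) : qNum (n + 1) ≠ 0 := by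
  have h := q_pow_sub_one_ne_zero n.succ_ne_zero
  rw [← geom_sum_mul] at h
  exact left_ne_zero_of_mul h

lemma qNumFac_zero : qNumFac 0 = 1 := prod_range_zero _

lemma qNumFac_ne_zero (n : ℕ) : qNumFac n ≠ 0 :=
  prod_ne_zero_iff.mpr fun i _ => qNum_succ_ne_zero i

lemma prod_q_pow_succ_sub_one (s : ℕ) :
    ∏ i ∈ range s, (q ^ (i + 1) - 1) = (q - 1) ^ s * qNumFac s := by
  simp only [qNumFac, ← geom_sum_mul, prod_mul_distrib, prod_const, card_range, qNum]
  ring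

lemma qNumBinom_zero_right (r : ℕ) : qNumBinom r 0 = 1 := by
  rw [qNumBinom, Nat.sub_zero, qNumFac_zero, one_mul, div_self (qNumFac_ne_zero r)]

lemma qNumBinom_self (r : ℕ) : qNumBinom r r = 1 := by
  rw [qNumBinom, Nat.sub_self, qNumFac_zero, mul_one, div_self (qNumFac_ne_zero r)]

lemma qNumBinom_succ_succ {r s : ℕ} (hs : s < r) :
    qNumBinom (r + 1) (s + 1) = qNumBinom r s + q ^ (s + 1) * qNumBinom r (s + 1) := by
  obtain ⟨t, rfl⟩ := Nat.exists_eq_add_of_lt hs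
  have h1 : s + t + 1 + 1 - (s + 1) = t + 1 := by omega
  have h2 : s + t + 1 - s = t + 1 := by omega
  have h3 : s + t + 1 - (s + 1) = t := by omega
  simp only [qNumBinom, h1, h2, h3]
  have e1 : qNumFac (s + t + 1 + 1) = qNumFac (s + t + 1) * qNum (s + t + 2) := prod_range_succ _ _
  have e2 : qNumFac (s + 1) = qNumFac s * qNum (s + 1) := prod_range_succ _ _
  have e3 : qNumFac (t + 1) = qNumFac t * qNum (t + 1) := prod_range_succ _ _
  have e4 : qNum (s + t + 2) = qNum (s + 1) + q ^ (s + 1) * qNum (t + 1) := by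
    rw [← qNum_add]; ring_nf
  rw [e1, e2, e3, e4]
  field_simp [qNumFac_ne_zero, qNum_succ_ne_zero]

-- For `k > n` the truncated subtraction produces the factor `[0]_q = 0`, so this vanishes.
def qIntDescFac (n k : ℕ) : 𝕂 := ∏ i ∈ range k, qInt (n - i)

lemma qIntDescFac_zero (n : ℕ) : qIntDescFac n 0 = 1 := prod_range_zero _

lemma qIntDescFac_succ (n k : ℕ) : qIntDescFac n (k + 1) = qIntDescFac n k * qInt (n - k) :=
  prod_range_succ _ _

lemma qIntDescFac_succ_succ (n k : ℕ) :
    qIntDescFac (n + 1) (k + 1) = qInt (n + 1) * qIntDescFac n k := by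
  simp only [qIntDescFac, prod_range_succ', Nat.add_sub_add_right, Nat.sub_zero, mul_comm]

lemma qIntDescFac_eq_zero_of_lt {n k : ℕ} (h : n < k) : qIntDescFac n k = 0 :=
  prod_eq_zero (mem_range.mpr h) (by simp [qInt_zero])

lemma qIntDescFac_ne_zero {n k : ℕ} (h : k ≤ n) : qIntDescFac n k ≠ 0 :=
  prod_ne_zero_iff.mpr fun i hi => by
    rw [show n - i = n - i - 1 + 1 by have := mem_range.mp hi; omega]
    exact qInt_succ_ne_zero _

lemma qIntDescFac_mul_qIntFac_sub {n k : ℕ} (h : k ≤ n) :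
    qIntDescFac n k * qIntFac (n - k) = qIntFac n := by
  induction k with
  | zero => simp [qIntDescFac_zero]
  | succ k ih =>
    obtain ⟨m, hm⟩ : ∃ m, n - k = m + 1 := ⟨n - k - 1, by omega⟩
    rw [qIntDescFac_succ, show n - (k + 1) = m by omega, hm, mul_assoc, mul_comm (qInt _),
      qIntFac, ← prod_range_succ, ← qIntFac, ← hm, ih (by omega)]

def reorderExp (h f r : ℕ) : ℤ := ((r + 1).choose 2 : ℕ) - (r : ℤ) * ((h : ℤ) + (f : ℤ) - (r : ℤ))

def reorderCoeff (h f r : ℕ) : 𝕂 :=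
  (-1) ^ r * q ^ reorderExp h f r * qIntDescFac h r * qIntDescFac f r

lemma reorderCoeff_zero_right (h f : ℕ) : reorderCoeff h f 0 = 1 := by
  simp [reorderCoeff, reorderExp, qIntDescFac_zero]

lemma reorderCoeff_eq_zero_of_lt {h f r : ℕ} (hr : h < r ∨ f < r) : reorderCoeff h f r = 0 := by
  rcases hr with hr | hr <;> simp [reorderCoeff, qIntDescFac_eq_zero_of_lt hr]

lemma reorderCoeff_succ_succ {h r : ℕ} (f : ℕ) (hr : r ≤ h) :
    reorderCoeff (h + 1) f (r + 1) = q⁻¹ ^ (2 * (r + 1)) * reorderCoeff h f (r + 1) -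
      q⁻¹ ^ (f - r - 1) * qInt (f - r) * qInt (r + 1) * reorderCoeff h f r := by
  rcases le_or_gt f r with hf | hf
  · simp [reorderCoeff_eq_zero_of_lt (Or.inr (Nat.lt_succ_of_le hf)), Nat.sub_eq_zero_of_le hf,
      qInt_zero]
  have hq := q_ne_zero
  have hsplit : qInt (h + 1) = q⁻¹ ^ (r + 1) * qInt (h - r) + q ^ (h - r) * qInt (r + 1) := by
    rw [← qInt_add, show h - r + (r + 1) = h + 1 by omega]
  have hexp₁ : q⁻¹ ^ (2 * (r + 1)) * q ^ reorderExp h f (r + 1) =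
      q ^ reorderExp (h + 1) f (r + 1) * q⁻¹ ^ (r + 1) := by
    rw [inv_q_pow, inv_q_pow, ← zpow_add₀ hq, ← zpow_add₀ hq]
    congr 1; simp only [reorderExp]; push_cast; ring
  have hexp₂ : q⁻¹ ^ (f - r - 1) * q ^ reorderExp h f r =
      q ^ reorderExp (h + 1) f (r + 1) * q ^ (h - r) := by
    rw [inv_q_pow, ← zpow_natCast q (h - r), ← zpow_add₀ hq, ← zpow_add₀ hq]
    have : ((f - r - 1 : ℕ) : ℤ) = f - r - 1 := by omega
    have : ((h - r : ℕ) : ℤ) = h - r := by omega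
    congr 1
    simp only [reorderExp, Nat.choose_succ_succ' (r + 1) 1, Nat.choose_one_right]
    push_cast; linarith
  simp only [reorderCoeff, qIntDescFac_succ_succ, qIntDescFac_succ]
  set K := (-1) ^ (r + 1) * qIntDescFac h r * qIntDescFac f r * qInt (f - r)
  linear_combination K * q ^ reorderExp (h + 1) f (r + 1) * hsplit - K * qInt (h - r) * hexp₁
    - K * qInt (r + 1) * hexp₂

section SkewCommutation

variable {x y z w : A} {t : 𝕂}

lemma mul_eq_inv_smul_of_mul_eq_smul (ht : t ≠ 0) (h : x * y = t • (y * x)) :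
    y * x = t⁻¹ • (x * y) := by
  rw [h, smul_smul, inv_mul_cancel₀ ht, one_smul]

lemma pow_mul_eq_smul_of_mul_eq_smul (h : x * y = t • (y * x)) (n : ℕ) :
    x ^ n * y = t ^ n • (y * x ^ n) := by
  induction n with
  | zero => simp
  | succ n ih =>
    calc x ^ (n + 1) * y = x ^ n * (x * y) := by rw [pow_succ, mul_assoc]
      _ = t • ((x ^ n * y) * x) := by rw [h, mul_smul_comm, mul_assoc]
      _ = t ^ (n + 1) • (y * x ^ (n + 1)) := by
        rw [ih, smul_mul_assoc, smul_smul, mul_assoc, ← pow_succ, ← pow_succ']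

lemma mul_pow_eq_smul_of_mul_eq_smul (h : x * y = t • (y * x)) (n : ℕ) :
    x * y ^ n = t ^ n • (y ^ n * x) := by
  induction n with
  | zero => simp
  | succ n ih =>
    calc x * y ^ (n + 1) = (x * y ^ n) * y := by rw [pow_succ, mul_assoc]
      _ = t ^ n • (y ^ n * (x * y)) := by rw [ih, smul_mul_assoc, mul_assoc]
      _ = t ^ (n + 1) • (y ^ (n + 1) * x) := by
        rw [h, mul_smul_comm, smul_smul, ← mul_assoc, ← pow_succ, ← pow_succ]

lemma mul_mul_eq_sq_smul (hxy : x * y = t • (y * x)) (hxz : x * z = t • (z * x)) :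
    x * (y * z) = t ^ 2 • (y * z * x) := by
  rw [← mul_assoc, hxy, smul_mul_assoc, mul_assoc, hxz, mul_smul_comm, smul_smul, ← sq,
    ← mul_assoc]

lemma mul_mul_eq_sq_smul' (hyw : y * w = t • (w * y)) (hzw : z * w = t • (w * z)) :
    y * z * w = t ^ 2 • (w * (y * z)) := by
  rw [mul_assoc, hzw, mul_smul_comm, ← mul_assoc, hyw, smul_mul_assoc, smul_smul, ← sq,
    mul_assoc]

lemma smul_mul_smul_of_mul_eq_smul (h : x * y = t • (y * x)) (u v : 𝕂) :
    u • x * v • y = t • (v • y * u • x) := by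
  rw [smul_mul_smul_comm, smul_mul_smul_comm, h, smul_comm, mul_comm u v]

end SkewCommutation

lemma qDiv_mul_self (y : A) (r : ℕ) : qDiv y r * y = qInt (r + 1) • qDiv y (r + 1) := by
  have hfac : qIntFac (r + 1) = qIntFac r * qInt (r + 1) := prod_range_succ _ _
  rw [qDiv, qDiv, smul_mul_assoc, ← pow_succ, smul_smul, hfac, mul_inv,
    mul_left_comm, mul_inv_cancel₀ (qInt_succ_ne_zero r), mul_one]

lemma qDiv_smul_mul_of_commute {y z : A} (hyz : y * z = z * y) (u : 𝕂) (r : ℕ) :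
    qDiv (u • (y * z)) r = qDiv (u • y) r * z ^ r := by
  rw [qDiv, qDiv, smul_pow, smul_pow, Commute.mul_pow hyz, smul_mul_assoc, smul_mul_assoc]

section Reordering

variable {x y z : A}

lemma pow_succ_mul_of_commutator (hyz : y * z = q ^ 2 • (z * y)) (hxz : x * z - z * x = y)
    (n : ℕ) : z ^ (n + 1) * x = x * z ^ (n + 1) - (q⁻¹ ^ n * qInt (n + 1)) • (y * z ^ n) := by
  have hzx : z * x = x * z - y := by rw [← hxz, sub_sub_cancel]
  have hzy := mul_eq_inv_smul_of_mul_eq_smul (pow_ne_zero 2 q_ne_zero) hyz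
  induction n with
  | zero => simp [hzx, qInt_one]
  | succ n ih =>
    have hq : q⁻¹ ^ (n + 1) * qInt (n + 1 + 1) = 1 + q⁻¹ ^ n * qInt (n + 1) * (q ^ 2)⁻¹ := by
      have h1 : q⁻¹ ^ (n + 1) * q ^ (n + 1) = 1 := by
        rw [← mul_pow, inv_mul_cancel₀ q_ne_zero, one_pow]
      rw [qInt_add (n + 1) 1, qInt_one]
      linear_combination h1
    calc z ^ (n + 1 + 1) * x = z * (z ^ (n + 1) * x) := by rw [pow_succ', mul_assoc]
      _ = (z * x) * z ^ (n + 1) - (q⁻¹ ^ n * qInt (n + 1)) • ((z * y) * z ^ n) := by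
        rw [ih, mul_sub, mul_smul_comm, ← mul_assoc, ← mul_assoc]
      _ = x * z ^ (n + 1 + 1) - (q⁻¹ ^ (n + 1) * qInt (n + 1 + 1)) • (y * z ^ (n + 1)) := by
        rw [hzx, hzy, hq, sub_mul, add_smul, one_smul, smul_mul_assoc, smul_smul, mul_assoc,
          mul_assoc, mul_assoc, ← pow_succ', ← pow_succ']
        abel

lemma pow_mul_of_commutator (hyz : y * z = q ^ 2 • (z * y)) (hxz : x * z - z * x = y)
    (n : ℕ) : z ^ n * x = x * z ^ n - (q⁻¹ ^ (n - 1) * qInt n) • (y * z ^ (n - 1)) := by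
  cases n with
  | zero => simp [qInt_zero]
  | succ n => exact pow_succ_mul_of_commutator hyz hxz n

lemma pow_mul_qDiv_mul_pow_mul (hxy : x * y = q ^ 2 • (y * x)) (hyz : y * z = q ^ 2 • (z * y))
    (hxz : x * z - z * x = y) (m r n : ℕ) :
    x ^ m * qDiv y r * z ^ n * x = q⁻¹ ^ (2 * r) • (x ^ (m + 1) * qDiv y r * z ^ n) -
      (q⁻¹ ^ (n - 1) * qInt n * qInt (r + 1)) • (x ^ m * qDiv y (r + 1) * z ^ (n - 1)) := by
  have hyx : qDiv y r * x = q⁻¹ ^ (2 * r) • (x * qDiv y r) := by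
    rw [qDiv, smul_mul_assoc, pow_mul_eq_smul_of_mul_eq_smul
      (mul_eq_inv_smul_of_mul_eq_smul (pow_ne_zero 2 q_ne_zero) hxy), smul_comm, mul_smul_comm,
      ← inv_pow, ← pow_mul, mul_comm 2 r]
  rw [mul_assoc, pow_mul_of_commutator hyz hxz, mul_sub, ← mul_assoc, mul_assoc (x ^ m), hyx,
    mul_smul_comm, smul_mul_assoc, ← mul_assoc, ← pow_succ, mul_smul_comm, ← mul_assoc,
    mul_assoc (x ^ m), qDiv_mul_self, mul_smul_comm, smul_mul_assoc, smul_smul]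

theorem pow_mul_pow_eq_sum_reorderCoeff (hxy : x * y = q ^ 2 • (y * x))
    (hyz : y * z = q ^ 2 • (z * y)) (hxz : x * z - z * x = y) (f h : ℕ) :
    z ^ f * x ^ h =
      ∑ r ∈ range (h + 1), reorderCoeff h f r • (x ^ (h - r) * qDiv y r * z ^ (f - r)) := by
  induction h with
  | zero => simp [reorderCoeff_zero_right, qDiv, qIntFac]
  | succ h ih =>
    set X : ℕ → A := fun r => x ^ (h + 1 - r) * qDiv y r * z ^ (f - r)
    set c : ℕ → 𝕂 := fun r => q⁻¹ ^ (f - r - 1) * qInt (f - r) * qInt (r + 1)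
    have step : ∀ r ∈ range (h + 1),
        reorderCoeff h f r • (x ^ (h - r) * qDiv y r * z ^ (f - r) * x) =
          (q⁻¹ ^ (2 * r) * reorderCoeff h f r) • X r - (c r * reorderCoeff h f r) • X (r + 1) := by
      intro r hr
      have hr : r ≤ h := Nat.lt_succ_iff.mp (mem_range.mp hr)
      rw [pow_mul_qDiv_mul_pow_mul hxy hyz hxz, smul_sub, smul_smul, smul_smul,
        mul_comm _ (q⁻¹ ^ _), mul_comm _ (c r)]
      simp only [X, show h - r + 1 = h + 1 - r by omega, show h + 1 - (r + 1) = h - r by omega,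
        Nat.sub_sub]
    have shift : ∑ r ∈ range (h + 1), (q⁻¹ ^ (2 * r) * reorderCoeff h f r) • X r =
        X 0 + ∑ r ∈ range (h + 1),
          (q⁻¹ ^ (2 * (r + 1)) * reorderCoeff h f (r + 1)) • X (r + 1) := by
      have last : (q⁻¹ ^ (2 * (h + 1)) * reorderCoeff h f (h + 1)) • X (h + 1) = 0 := by
        rw [reorderCoeff_eq_zero_of_lt (Or.inl h.lt_succ_self), mul_zero, zero_smul]
      rw [← add_zero (∑ r ∈ range (h + 1), _), ← last, ← sum_range_succ, sum_range_succ',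
        mul_zero, pow_zero, reorderCoeff_zero_right, mul_one, one_smul, add_comm]
    calc z ^ f * x ^ (h + 1) = ∑ r ∈ range (h + 1),
          reorderCoeff h f r • (x ^ (h - r) * qDiv y r * z ^ (f - r) * x) := by
          rw [pow_succ, ← mul_assoc, ih, sum_mul]; simp only [smul_mul_assoc]
      _ = X 0 + ∑ r ∈ range (h + 1), (q⁻¹ ^ (2 * (r + 1)) * reorderCoeff h f (r + 1) -
          c r * reorderCoeff h f r) • X (r + 1) := by
          rw [sum_congr rfl step, sum_sub_distrib, shift, add_sub_assoc, ← sum_sub_distrib]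
          simp only [sub_smul]
      _ = ∑ r ∈ range (h + 1 + 1), reorderCoeff (h + 1) f r • X r := by
          rw [sum_range_succ' (fun r => reorderCoeff (h + 1) f r • X r), reorderCoeff_zero_right,
            one_smul, add_comm]
          congr 1
          refine sum_congr rfl fun r hr => ?_
          rw [reorderCoeff_succ_succ f (Nat.lt_succ_iff.mp (mem_range.mp hr))]

theorem qDiv_mul_qDiv_eq_sum (hxy : x * y = q ^ 2 • (y * x))
    (hyz : y * z = q ^ 2 • (z * y)) (hxz : x * z - z * x = y) (f h : ℕ) :
    qDiv z f * qDiv x h = ∑ r ∈ range (min h f + 1),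
      ((-1) ^ r * q ^ reorderExp h f r) • (qDiv x (h - r) * qDiv y r * qDiv z (f - r)) := by
  have hsub : range (min h f + 1) ⊆ range (h + 1) := range_subset_range.mpr (by omega)
  rw [qDiv, qDiv, smul_mul_smul, pow_mul_pow_eq_sum_reorderCoeff hxy hyz hxz, smul_sum,
    ← sum_subset hsub fun r hr₁ hr₂ => ?vanish]
  case vanish =>
    rw [reorderCoeff_eq_zero_of_lt (Or.inr (by simp at hr₁ hr₂; omega)), zero_smul, smul_zero]
  refine sum_congr rfl fun r hr => ?_
  have hrh : r ≤ h := by simp at hr; omega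
  have hrf : r ≤ f := by simp at hr; omega
  simp only [qDiv, smul_mul_assoc, mul_smul_comm, smul_smul, reorderCoeff]
  congr 1
  rw [← qIntDescFac_mul_qIntFac_sub hrh, ← qIntDescFac_mul_qIntFac_sub hrf]
  field_simp [qIntFac_ne_zero, qIntDescFac_ne_zero hrh, qIntDescFac_ne_zero hrf]

end Reordering

def qBinNum (X : A) (c : ℤ) (n : ℕ) : A :=
  ((List.range n).map (fun i => (q ^ (c - (i : ℤ)) : 𝕂) • X - 1)).prod

lemma qBinNum_zero (X : A) (c : ℤ) : qBinNum X c 0 = 1 := rfl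

lemma qBinNum_succ (X : A) (c : ℤ) (n : ℕ) :
    qBinNum X c (n + 1) = qBinNum X c n * ((q ^ (c - n) : 𝕂) • X - 1) := by
  simp [qBinNum, List.range_succ]

lemma qBin_eq_smul_qBinNum (X : A) (c : ℤ) (n : ℕ) :
    qBin X c n = ((q - 1) ^ n * qNumFac n)⁻¹ • qBinNum X c n := by
  rw [qBin, qBinNum, prod_q_pow_succ_sub_one]

lemma qBinNum_mul_self (X : A) (s : ℕ) :
    qBinNum X 0 s * X = q ^ s • (qBinNum X 0 (s + 1) + qBinNum X 0 s) := by
  rw [qBinNum_succ, mul_sub, mul_one, sub_add_cancel, mul_smul_comm, smul_smul, zero_sub,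
    ← zpow_natCast, ← zpow_add₀ q_ne_zero, add_neg_cancel, zpow_zero, one_smul]

lemma pow_eq_sum_qBinNum (X : A) (r : ℕ) :
    X ^ r = ∑ s ∈ range (r + 1), (q ^ s.choose 2 * qNumBinom r s) • qBinNum X 0 s := by
  induction r with
  | zero => simp [qNumBinom_zero_right, qBinNum_zero]
  | succ r ih =>
    have choose : ∀ s : ℕ, (q : 𝕂) ^ (s + 1).choose 2 = q ^ s.choose 2 * q ^ s := fun s => by
      rw [Nat.choose_succ_succ', Nat.choose_one_right, pow_add, mul_comm (q ^ _)]
    set N : ℕ → A := qBinNum X 0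
    have pascal : ∑ s ∈ range r, (q ^ (s + 1).choose 2 * qNumBinom (r + 1) (s + 1)) • N (s + 1) =
        ∑ s ∈ range r, (q ^ (s + 1).choose 2 * qNumBinom r s) • N (s + 1) +
          ∑ s ∈ range r,
            (q ^ (s + 1).choose 2 * q ^ (s + 1) * qNumBinom r (s + 1)) • N (s + 1) := by
      rw [← sum_add_distrib]
      refine sum_congr rfl fun s hs => ?_
      rw [qNumBinom_succ_succ (mem_range.mp hs), ← add_smul]
      ring_nf
    calc X ^ (r + 1) = ∑ s ∈ range (r + 1), (q ^ s.choose 2 * qNumBinom r s) • (N s * X) := by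
          rw [pow_succ, ih, sum_mul]; simp only [smul_mul_assoc]
      _ = ∑ s ∈ range (r + 1), (q ^ (s + 1).choose 2 * qNumBinom r s) • N (s + 1) +
          ∑ s ∈ range (r + 1), (q ^ s.choose 2 * q ^ s * qNumBinom r s) • N s := by
          rw [← sum_add_distrib]
          refine sum_congr rfl fun s _ => ?_
          rw [qBinNum_mul_self, choose, smul_smul, smul_add, mul_right_comm]
      _ = ∑ s ∈ range (r + 1 + 1), (q ^ s.choose 2 * qNumBinom (r + 1) s) • N s := by
          rw [sum_range_succ, sum_range_succ', sum_range_succ', sum_range_succ, pascal]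
          simp only [qNumBinom_self, qNumBinom_zero_right, choose, Nat.choose_zero_succ, pow_zero,
            mul_one, one_smul]
          abel

lemma pow_eq_sum_qBin (X : A) (r : ℕ) :
    X ^ r = ∑ s ∈ range (r + 1),
      (q ^ s.choose 2 * (q - 1) ^ s * qNumFac s * qNumBinom r s) • qBin X 0 s := by
  rw [pow_eq_sum_qBinNum]
  refine sum_congr rfl fun s _ => ?_
  rw [qBin_eq_smul_qBinNum, smul_smul]
  congr 1
  field_simp [q_sub_one_ne_zero, qNumFac_ne_zero]

lemma qBinNum_mul_pow {c w : A} (h : c * w = q • (w * c)) (μ : ℤ) (s n : ℕ) :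
    qBinNum c μ s * w ^ n = w ^ n * qBinNum c (μ + n) s := by
  induction s with
  | zero => simp [qBinNum_zero]
  | succ s ih =>
    have factor :
        ((q ^ (μ - s) : 𝕂) • c - 1) * w ^ n = w ^ n * ((q ^ (μ + n - s) : 𝕂) • c - 1) := by
      rw [sub_mul, smul_mul_assoc, mul_pow_eq_smul_of_mul_eq_smul h, smul_smul, mul_sub,
        mul_smul_comm, one_mul, mul_one, ← zpow_natCast, ← zpow_add₀ q_ne_zero, sub_add_eq_add_sub]
    rw [qBinNum_succ, mul_assoc, factor, ← mul_assoc, ih, mul_assoc, ← qBinNum_succ]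

lemma qBin_mul_qDiv {c w : A} (h : c * w = q • (w * c)) (μ : ℤ) (s n : ℕ) :
    qBin c μ s * qDiv w n = qDiv w n * qBin c (μ + n) s := by
  rw [qBin_eq_smul_qBinNum, qBin_eq_smul_qBinNum, qDiv, smul_mul_smul_comm, smul_mul_smul_comm,
    qBinNum_mul_pow h, mul_comm]

section QuantumMatrix

variable {a b c d : A}

def relationCoeff (h f r s : ℕ) : 𝕂 :=
  (-1) ^ r * q ^ ((((r + 1).choose 2 : ℕ) : ℤ) + ((s.choose 2 : ℕ) : ℤ) -
    (r : ℤ) * ((h : ℤ) + (f : ℤ) - (r : ℤ))) * (q - 1) ^ s * qNumFac s * qNumBinom r s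

lemma relationCoeff_eq (h f r s : ℕ) :
    relationCoeff h f r s = ((-1) ^ r * q ^ reorderExp h f r) *
      (q ^ s.choose 2 * (q - 1) ^ s * qNumFac s * qNumBinom r s) := by
  rw [relationCoeff, reorderExp, show ∀ u v w : ℤ, u + v - w = (u - w) + v by intros; ring,
    zpow_add₀ q_ne_zero, zpow_natCast]
  ring

theorem qDiv_mul_qDiv_eq_sum_qBin_zero_mul (hab : a * b = q • (b * a)) (hac : a * c = q • (c * a))
    (hbd : b * d = q • (d * b)) (hcd : c * d = q • (d * c)) (hbc : b * c = c * b)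
    (had : a * d - d * a = (q - q⁻¹) • (b * c)) (h f : ℕ) :
    qDiv ((q - q⁻¹)⁻¹ • d) f * qDiv ((q - q⁻¹)⁻¹ • a) h =
      ∑ r ∈ range (min h f + 1), ∑ s ∈ range (r + 1), relationCoeff h f r s •
        (qDiv ((q - q⁻¹)⁻¹ • a) (h - r) * qDiv ((q - q⁻¹)⁻¹ • b) r * qBin c 0 s *
          qDiv ((q - q⁻¹)⁻¹ • d) (f - r)) := by
  set k : 𝕂 := (q - q⁻¹)⁻¹
  have hxy := smul_mul_smul_of_mul_eq_smul (mul_mul_eq_sq_smul hab hac) k k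
  have hyz := smul_mul_smul_of_mul_eq_smul (mul_mul_eq_sq_smul' hbd hcd) k k
  have hxz : k • a * k • d - k • d * k • a = k • (b * c) := by
    rw [smul_mul_smul_comm, smul_mul_smul_comm, ← smul_sub, had, smul_smul, mul_assoc,
      inv_mul_cancel₀ q_sub_q_inv_ne_zero, mul_one]
  rw [qDiv_mul_qDiv_eq_sum hxy hyz hxz]
  refine sum_congr rfl fun r _ => ?_
  rw [qDiv_smul_mul_of_commute hbc, pow_eq_sum_qBin c r]
  simp only [mul_sum, sum_mul, smul_sum, mul_smul_comm, smul_mul_assoc, smul_smul, ← mul_assoc,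
    relationCoeff_eq]

end QuantumMatrix

/-- **Relation [D.3+] of Theorem 4.6** for a `2×2` quantum matrix, with
`𝐱^(m) := ((q − q⁻¹)⁻¹ x)^m/[m]_q!` for `x ∈ {a,b,d}` and
`A(h,f,r,s) := binom(r+1,2) + binom(s,2) − r(h+f−r)`. -/
theorem relation_D3_plus {A : Type*} [Ring A] [Algebra 𝕂 A]
    (a b c d : A)
    (hab : a * b = q • (b * a)) (hac : a * c = q • (c * a))
    (hbd : b * d = q • (d * b)) (hcd : c * d = q • (d * c))
    (hbc : b * c = c * b)
    (had : a * d - d * a = ((q - q⁻¹ : 𝕂)) • (b * c))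
    (h f : ℕ) :
    (qDiv (((q - q⁻¹)⁻¹ : 𝕂) • d) f * qDiv (((q - q⁻¹)⁻¹ : 𝕂) • a) h =
      ∑ r ∈ range (min h f + 1), ∑ s ∈ range (r + 1),
        ((-1) ^ r *
            q ^ ((((r + 1).choose 2 : ℕ) : ℤ) + ((s.choose 2 : ℕ) : ℤ) -
              (r : ℤ) * ((h : ℤ) + (f : ℤ) - (r : ℤ))) *
            (q - 1) ^ s * qNumFac s * qNumBinom r s : 𝕂) •
          (qDiv (((q - q⁻¹)⁻¹ : 𝕂) • a) (h - r) * qDiv (((q - q⁻¹)⁻¹ : 𝕂) • b) r *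
            qDiv (((q - q⁻¹)⁻¹ : 𝕂) • d) (f - r) * qBin c ((f : ℤ) - (r : ℤ)) s))
    ∧
    (qDiv (((q - q⁻¹)⁻¹ : 𝕂) • d) f * qDiv (((q - q⁻¹)⁻¹ : 𝕂) • a) h =
      ∑ r ∈ range (min h f + 1), ∑ s ∈ range (r + 1),
        ((-1) ^ r *
            q ^ ((((r + 1).choose 2 : ℕ) : ℤ) + ((s.choose 2 : ℕ) : ℤ) -
              (r : ℤ) * ((h : ℤ) + (f : ℤ) - (r : ℤ))) *
            (q - 1) ^ s * qNumFac s * qNumBinom r s : 𝕂) •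
          (qDiv (((q - q⁻¹)⁻¹ : 𝕂) • a) (h - r) * qDiv (((q - q⁻¹)⁻¹ : 𝕂) • b) r *
            qBin c 0 s * qDiv (((q - q⁻¹)⁻¹ : 𝕂) • d) (f - r))) := by
  have hcd' : c * (q - q⁻¹)⁻¹ • d = q • ((q - q⁻¹)⁻¹ • d * c) := by
    rw [mul_smul_comm, hcd, smul_mul_assoc, smul_comm]
  have hqBin_zero := qDiv_mul_qDiv_eq_sum_qBin_zero_mul hab hac hbd hcd hbc had h f
  refine ⟨?_, hqBin_zero⟩
  rw [hqBin_zero]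
  refine sum_congr rfl fun r hr => sum_congr rfl fun s _ => ?_
  rw [relationCoeff, mul_assoc _ (qBin c 0 s), qBin_mul_qDiv hcd', zero_add, ← mul_assoc,
    Nat.cast_sub (by simp at hr; omega)]

end
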